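/- arXiv:2212.08018 — 3 statements merged into one kernel-verified Lean document; each statement's English description precedes it below -/
import Mathlib

section
/- Let A be a d×d symmetric positive definite real matrix with eigenvalues λ₁,…,λ_d > 0. Then Σ_{j=1}^d (λ_j − 1 − log λ_j) ≤ ‖A − I‖_F · ‖I − A^{-1}‖_F. (In the analysis of the Gaussian Sampling Mechanism with A = Σ₁^{1/2}Σ₂^{-1}Σ₁^{1/2}, the expected privacy loss of releasing k samples equals (k/2)·Σ_j(λ_j − 1 − log λ_j), so this inequality bounds it by (k/2)·‖A−I‖_F·‖I−A^{-1}‖_F.) -/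
open MeasureTheory Matrix Real
open scoped ENNReal NNReal BigOperators

noncomputable section

instance {m n : Type*} {α : Type*} [MeasurableSpace α] : MeasurableSpace (Matrix m n α) :=
  inferInstanceAs (MeasurableSpace (m → n → α))

/-- The density of the multivariate Gaussian `N(μ, S)` on `ℝ^d`. -/
def gaussianDensity {d : ℕ} (μ : Fin d → ℝ) (S : Matrix (Fin d) (Fin d) ℝ)
    (x : Fin d → ℝ) : ℝ :=
  (2 * Real.pi) ^ (-(d : ℝ) / 2) * S.det ^ (-(1 : ℝ) / 2) *
    Real.exp (-(dotProduct (x - μ) (S⁻¹.mulVec (x - μ))) / 2)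

/-- The multivariate Gaussian measure `N(μ, S)` on `ℝ^d`. -/
def gaussianMeasure {d : ℕ} (μ : Fin d → ℝ) (S : Matrix (Fin d) (Fin d) ℝ) :
    Measure (Fin d → ℝ) :=
  volume.withDensity fun x => ENNReal.ofReal (gaussianDensity μ S x)

/-- The law `N(μ, S)^⊗n` of `n` i.i.d. samples from `N(μ, S)`. -/
def gaussianPi {d : ℕ} (n : ℕ) (μ : Fin d → ℝ) (S : Matrix (Fin d) (Fin d) ℝ) :
    Measure (Fin n → Fin d → ℝ) :=
  Measure.pi fun _ => gaussianMeasure μ S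

/-- Total variation distance between measures. -/
def tvDist {E : Type*} [MeasurableSpace E] (P Q : Measure E) : ℝ :=
  ⨆ S : {S : Set E // MeasurableSet S}, |(P S.1).toReal - (Q S.1).toReal|

/-- Frobenius norm of a matrix. -/
def frobNorm {d : ℕ} (A : Matrix (Fin d) (Fin d) ℝ) : ℝ :=
  Real.sqrt (∑ i, ∑ j, (A i j) ^ 2)

/-- Euclidean norm of a vector. -/
def vecNorm {d : ℕ} (v : Fin d → ℝ) : ℝ := Real.sqrt (∑ i, (v i) ^ 2)

/-- `psdLE A B` is the Loewner order `A ⪯ B`, i.e. `B - A` is positive semidefinite. -/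
def psdLE {d : ℕ} (A B : Matrix (Fin d) (Fin d) ℝ) : Prop := (B - A).PosSemidef

/-- Two datasets are neighboring if they differ in at most one coordinate. -/
def Neighbor {n : ℕ} {α : Type*} (x x' : Fin n → α) : Prop :=
  ∃ j, ∀ i, i ≠ j → x i = x' i

/-- Pure `ε`-differential privacy of a mechanism. -/
def PureDP {n : ℕ} {α : Type*} {Ω : Type*} [MeasurableSpace Ω]
    (M : (Fin n → α) → Measure Ω) (ε : ℝ) : Prop :=
  ∀ x x', Neighbor x x' → ∀ S : Set Ω, MeasurableSet S →
    M x S ≤ ENNReal.ofReal (Real.exp ε) * M x' S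

/-- Approximate `(ε, δ)`-differential privacy of a mechanism. -/
def ApproxDP {n : ℕ} {α : Type*} {Ω : Type*} [MeasurableSpace Ω]
    (M : (Fin n → α) → Measure Ω) (ε δ : ℝ) : Prop :=
  ∀ x x', Neighbor x x' → ∀ S : Set Ω, MeasurableSet S →
    M x S ≤ ENNReal.ofReal (Real.exp ε) * M x' S + ENNReal.ofReal δ

/-- Unnormalized entropy `Ent(x) = ∑ᵢ (xᵢ log(1/xᵢ) + xᵢ)`
(with the convention `0 · log(1/0) = 0`, automatic in Lean). -/
def Ent {n : ℕ} (x : Fin n → ℝ) : ℝ := ∑ i, (x i * Real.log (1 / x i) + x i)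

end

/-!
With `U` an orthogonal matrix diagonalising `A`, both `A - 1` and `1 - A⁻¹` are `U D Uᵀ` with
`D` diagonal (they are functions of `A` in the functional calculus), so the right-hand side is
`‖(λⱼ - 1)ⱼ‖₂ · ‖(1 - λⱼ⁻¹)ⱼ‖₂`. Termwise, `-log λ = log λ⁻¹ ≤ λ⁻¹ - 1` gives
`λ - 1 - log λ ≤ (λ - 1)(1 - λ⁻¹)`, and Cauchy–Schwarz finishes.
-/

noncomputable section

lemma frobNorm_eq_sqrt_trace {d : ℕ} (M : Matrix (Fin d) (Fin d) ℝ) :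
    frobNorm M = √(star M * M).trace := by
  rw [frobNorm, trace, Finset.sum_comm]
  simp [mul_apply, sq]

lemma frobNorm_mul_mul_star_of_star_mul_self {d : ℕ} {U : Matrix (Fin d) (Fin d) ℝ}
    (hU : star U * U = 1) (M : Matrix (Fin d) (Fin d) ℝ) :
    frobNorm (U * M * star U) = frobNorm M := by
  rw [frobNorm_eq_sqrt_trace, frobNorm_eq_sqrt_trace, star_mul, star_mul, star_star]
  congr 1
  calc (U * (star M * star U) * (U * M * star U)).trace
      = (U * (star M * M) * star U).trace := by
        simp only [Matrix.mul_assoc, ← Matrix.mul_assoc (star U) U, hU, Matrix.one_mul]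
    _ = (star M * M).trace := by
        rw [trace_mul_cycle, ← Matrix.mul_assoc, hU, Matrix.one_mul]

lemma frobNorm_diagonal {d : ℕ} (v : Fin d → ℝ) : frobNorm (diagonal v) = √(∑ j, v j ^ 2) := by
  simp [frobNorm, diagonal_apply, ite_pow]

lemma Matrix.IsHermitian.frobNorm_cfc {d : ℕ} {A : Matrix (Fin d) (Fin d) ℝ}
    (hA : A.IsHermitian) (f : ℝ → ℝ) :
    frobNorm (cfc f A) = √(∑ j, f (hA.eigenvalues j) ^ 2) := by
  rw [hA.cfc_eq, IsHermitian.cfc, Unitary.conjStarAlgAut_apply,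
    frobNorm_mul_mul_star_of_star_mul_self (Unitary.coe_star_mul_self _), frobNorm_diagonal]
  rfl

lemma Real.sub_one_sub_log_le_sub_one_mul_one_sub_inv {x : ℝ} (hx : 0 < x) :
    x - 1 - log x ≤ (x - 1) * (1 - x⁻¹) := by
  have h := log_le_sub_one_of_pos (inv_pos.2 hx)
  rw [log_inv] at h
  have : (x - 1) * (1 - x⁻¹) = x - 1 + (x⁻¹ - 1) := by field_simp; ring
  linarith

/-- For a symmetric positive definite matrix `A` with eigenvalues `λⱼ > 0`,
`∑ⱼ (λⱼ - 1 - log λⱼ) ≤ ‖A - I‖_F · ‖I - A⁻¹‖_F`. -/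
theorem expected_privacy_loss_bound {d : ℕ}
    (A : Matrix (Fin d) (Fin d) ℝ) (hA : A.PosDef) :
    ∑ j, (hA.1.eigenvalues j - 1 - Real.log (hA.1.eigenvalues j))
      ≤ frobNorm (A - 1) * frobNorm (1 - A⁻¹) := by
  -- found by `cfc_tac` for the side conditions of the `cfc` lemmas below
  have hA_sa : IsSelfAdjoint A := hA.1
  have hsub : A - 1 = cfc (fun x : ℝ => x - 1) A := by
    rw [cfc_sub (fun x => x) (fun _ => 1) A, cfc_id' ℝ A, cfc_const_one ℝ A]
  have hsub_inv : 1 - A⁻¹ = cfc (fun x : ℝ => 1 - x⁻¹) A := by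
    rw [cfc_sub (fun _ => 1) (fun x => x⁻¹) A (hg := A.finite_real_spectrum.continuousOn _),
      cfc_const_one ℝ A, cfc_ringInverse_id (ha_unit := hA.isUnit), nonsing_inv_eq_ringInverse]
  rw [hsub, hsub_inv, hA.1.frobNorm_cfc, hA.1.frobNorm_cfc]
  calc ∑ j, (hA.1.eigenvalues j - 1 - log (hA.1.eigenvalues j))
      ≤ ∑ j, (hA.1.eigenvalues j - 1) * (1 - (hA.1.eigenvalues j)⁻¹) :=
        Finset.sum_le_sum fun j _ =>
          sub_one_sub_log_le_sub_one_mul_one_sub_inv (hA.eigenvalues_pos j)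
    _ ≤ _ := sum_mul_le_sqrt_mul_sqrt _ _ _

end
end

section
/- Let n ≥ 3 and let x, x' ∈ ℝ^n satisfy 0 ≤ x_i ≤ x'_i ≤ 2/n for every i ∈ {1,…,n}. Then Ent(x') − Ent(x) ≥ log(n/2) · ‖x' − x‖₁, where ‖y‖₁ = Σ_{i=1}^n |y_i|. (This is the strong-convexity-type estimate for the unnormalized entropy, used to convert a bound on the potential difference of two stabilized convex-program solutions into an ℓ₁ sensitivity bound of order L/(n·log n).) -/
open MeasureTheory Matrix Real
open scoped ENNReal NNReal BigOperators

/-! The coordinate function `t ↦ -t log t + t` of `Ent` is concave with derivative `-log t`, so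
its secant slope over `[xᵢ, x'ᵢ]` is at least `-log x'ᵢ ≥ -log (2/n) = log (n/2)`. -/

lemma Real.neg_log_sub_one_mul_le_negMulLog_sub {a b : ℝ} (ha : 0 ≤ a) (hab : a ≤ b) :
    (-log b - 1) * (b - a) ≤ negMulLog b - negMulLog a := by
  rcases hab.eq_or_lt with rfl | hlt
  · simp
  have hslope : -log b - 1 ≤ slope negMulLog a b :=
    concaveOn_negMulLog.le_slope_of_hasDerivAt ha (ha.trans hab) hlt
      (hasDerivAt_negMulLog (ha.trans_lt hlt).ne')
  rwa [slope_def_field, le_div_iff₀ (sub_pos.2 hlt)] at hslope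

lemma Real.log_inv_mul_sub_le_negMulLog_add_self_sub {a b c : ℝ} (ha : 0 ≤ a) (hab : a ≤ b)
    (hbc : b ≤ c) : log c⁻¹ * (b - a) ≤ (negMulLog b + b) - (negMulLog a + a) := by
  rcases hab.eq_or_lt with rfl | hlt
  · simp
  have hlog : log b ≤ log c := log_le_log (ha.trans_lt hlt) hbc
  calc log c⁻¹ * (b - a) = (-log c - 1) * (b - a) + (b - a) := by rw [log_inv]; ring
    _ ≤ (-log b - 1) * (b - a) + (b - a) := by gcongr
    _ ≤ (negMulLog b + b) - (negMulLog a + a) := by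
      linarith [neg_log_sub_one_mul_le_negMulLog_sub ha hab]

lemma Ent_eq_sum_negMulLog {n : ℕ} (x : Fin n → ℝ) :
    Ent x = ∑ i, (negMulLog (x i) + x i) := by
  simp only [Ent, negMulLog, one_div, log_inv]
  ring_nf

theorem ent_strong_convexity_general {n : ℕ} (x x' : Fin n → ℝ)
    (h : ∀ i, 0 ≤ x i ∧ x i ≤ x' i ∧ x' i ≤ 2 / n) :
    Real.log ((n : ℝ) / 2) * (∑ i, |x' i - x i|) ≤ Ent x' - Ent x := by
  rw [Ent_eq_sum_negMulLog, Ent_eq_sum_negMulLog, ← Finset.sum_sub_distrib, Finset.mul_sum,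
    ← inv_div]
  refine Finset.sum_le_sum fun i _ => ?_
  obtain ⟨hx, hxx', hx'⟩ := h i
  rw [abs_of_nonneg (sub_nonneg.2 hxx')]
  exact log_inv_mul_sub_le_negMulLog_add_self_sub hx hxx' hx'

/-- **Strong-convexity-type estimate for the unnormalized entropy.**
If `0 ≤ xᵢ ≤ x'ᵢ ≤ 2/n` for all `i`, then
`Ent(x') - Ent(x) ≥ log(n/2) · ‖x' - x‖₁`. -/
theorem ent_strong_convexity {n : ℕ} (hn : 3 ≤ n) (x x' : Fin n → ℝ)
    (h : ∀ i, 0 ≤ x i ∧ x i ≤ x' i ∧ x' i ≤ 2 / n) :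
    Real.log ((n : ℝ) / 2) * (∑ i, |x' i - x i|) ≤ Ent x' - Ent x :=
  ent_strong_convexity_general x x' h
end

section
/- Let d ∈ ℕ, κ ≥ 20, and let Σ, Σ̂ be d×d real symmetric matrices with I ⪯ Σ ⪯ κ·I and ‖Σ̂ − Σ‖_F ≤ 0.01·κ. Let V be the span of all eigenvectors of Σ̂ with eigenvalue at least κ/2, let Π be the orthogonal projection onto V, and set A₀ = 0.9·Π + (I − Π). Then 0.85·I ⪯ A₀ΣA₀ ⪯ 0.83·κ·I; consequently, the matrix A = √1.19·A₀ satisfies I ⪯ AΣA ⪯ 0.99·κ·I. (This is the deterministic core of the one-round weak private preconditioning step: any rough covariance estimate accurate to 0.01κ in Frobenius norm yields a preconditioner reducing the condition number by a constant factor.) -/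
open MeasureTheory Matrix Real
open scoped ENNReal NNReal BigOperators

/-!
Diagonalise `Shat = U * diagonal λ * Uᵀ`. Since `|xᵀ (Shat - S) x| ≤ ‖Shat - S‖_F ‖x‖²`, the
quadratic form of `Shat` lies between `(1 - 0.01κ) ‖x‖²` and `1.01κ ‖x‖²`, hence so do the
eigenvalues `λᵢ`. The preconditioner is `A₀ = U * diagonal μ * Uᵀ` with `μᵢ = 0.9` when
`λᵢ ≥ κ/2` and `μᵢ = 1` otherwise. For `v = U c` and `w = A₀ v = U (μ ⊙ c)`, the form `wᵀ S w`
is at least `‖w‖² = ∑ μᵢ² cᵢ²` and within `0.01κ ‖w‖²` of `wᵀ Shat w = ∑ λᵢ μᵢ² cᵢ²`.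
For the upper bound each coordinate contributes at most `(λᵢ + 0.01κ) μᵢ² ≤ 0.83κ`; for the lower
bound, averaging the two lower estimates with weights `(κ - 7.5)/κ` and `7.5/κ` makes each
coordinate contribute at least `0.85`. Scaling by `1.19` gives the bounds for `A`, because
`1.19 · 0.85 ≥ 1` and `1.19 · 0.83 ≤ 0.99`.
-/

noncomputable section

namespace Matrix

variable {n : Type*} [Fintype n]

theorem star_dotProduct_conjTranspose_mul_mul_mulVec {R : Type*} [CommRing R] [StarRing R]
    (B M : Matrix n n R) (v : n → R) :
    star v ⬝ᵥ (Bᴴ * M * B) *ᵥ v = star (B *ᵥ v) ⬝ᵥ M *ᵥ (B *ᵥ v) := by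
  simp only [star_mulVec, dotProduct_mulVec, vecMul_vecMul, mulVec_mulVec, Matrix.mul_assoc]

theorem dotProduct_diagonal_mulVec_self [DecidableEq n] (D x : n → ℝ) :
    x ⬝ᵥ diagonal D *ᵥ x = ∑ i, D i * x i ^ 2 := by
  simp only [dotProduct, mulVec_diagonal]
  exact Finset.sum_congr rfl fun i _ => by ring

theorem dotProduct_smul_one_mulVec [DecidableEq n] (t : ℝ) (x : n → ℝ) :
    x ⬝ᵥ (t • (1 : Matrix n n ℝ)) *ᵥ x = t * (x ⬝ᵥ x) := by
  rw [smul_mulVec, one_mulVec, dotProduct_smul, smul_eq_mul]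

variable [DecidableEq n] (U : unitaryGroup n ℝ)

theorem dotProduct_unitary_conj_mulVec (M : Matrix n n ℝ) (y : n → ℝ) :
    ((U : Matrix n n ℝ) *ᵥ y) ⬝ᵥ ((U : Matrix n n ℝ) * M * star (U : Matrix n n ℝ)) *ᵥ
      ((U : Matrix n n ℝ) *ᵥ y) = y ⬝ᵥ M *ᵥ y := by
  have hUU : star (U : Matrix n n ℝ) * U = 1 := Unitary.coe_star_mul_self U
  have hUy : ((U : Matrix n n ℝ) *ᵥ y) ᵥ* (U : Matrix n n ℝ) = y := by
    rw [← mulVec_transpose, mulVec_mulVec, ← conjTranspose_eq_transpose_of_trivial,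
      ← star_eq_conjTranspose, hUU, one_mulVec]
  rw [mulVec_mulVec, mul_assoc, hUU, mul_one, ← mulVec_mulVec, dotProduct_mulVec, hUy]

theorem dotProduct_unitary_mulVec_self (y : n → ℝ) :
    ((U : Matrix n n ℝ) *ᵥ y) ⬝ᵥ ((U : Matrix n n ℝ) *ᵥ y) = y ⬝ᵥ y := by
  simpa using dotProduct_unitary_conj_mulVec U 1 y

theorem mem_Icc_of_unitary_conj_diagonal {A : Matrix n n ℝ} {l : n → ℝ}
    (hA : A = U * diagonal l * star (U : Matrix n n ℝ)) {m M : ℝ}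
    (hbounds : ∀ x, m * (x ⬝ᵥ x) ≤ x ⬝ᵥ A *ᵥ x ∧ x ⬝ᵥ A *ᵥ x ≤ M * (x ⬝ᵥ x)) (i : n) :
    l i ∈ Set.Icc m M := by
  have h := hbounds ((U : Matrix n n ℝ) *ᵥ Pi.single i 1)
  rw [hA, dotProduct_unitary_conj_mulVec, dotProduct_unitary_mulVec_self,
    dotProduct_diagonal_mulVec_self, single_dotProduct, Fintype.sum_eq_single i
      (fun j hj => by simp [Pi.single_eq_of_ne hj])] at h
  simpa using h

theorem smul_add_one_sub_unitary_conj_diagonal {a : ℝ} {f g : n → ℝ}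
    (hfg : ∀ i, a * f i + (1 - f i) = g i) :
    a • ((U : Matrix n n ℝ) * diagonal f * star (U : Matrix n n ℝ)) +
      (1 - (U : Matrix n n ℝ) * diagonal f * star (U : Matrix n n ℝ)) =
      U * diagonal g * star (U : Matrix n n ℝ) := by
  have h := congrArg (Unitary.conjStarAlgAut ℝ _ U)
    (show a • diagonal f + (1 - diagonal f) = diagonal g by
      rw [← diagonal_one, ← diagonal_smul, diagonal_sub, diagonal_add]
      exact congrArg diagonal (funext hfg))
  rwa [map_add, map_smul, map_sub, map_one, Unitary.conjStarAlgAut_apply,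
    Unitary.conjStarAlgAut_apply] at h

end Matrix

theorem abs_dotProduct_mulVec_le_frobNorm {d : ℕ} (E : Matrix (Fin d) (Fin d) ℝ)
    (x : Fin d → ℝ) : |x ⬝ᵥ E *ᵥ x| ≤ frobNorm E * (x ⬝ᵥ x) := by
  have hquad : x ⬝ᵥ E *ᵥ x = ∑ p : Fin d × Fin d, E p.1 p.2 * (x p.1 * x p.2) := by
    simp only [dotProduct, mulVec, Fintype.sum_prod_type, Finset.mul_sum]
    exact Finset.sum_congr rfl fun i _ => Finset.sum_congr rfl fun j _ => by ring
  have hsq : ∑ p : Fin d × Fin d, (x p.1 * x p.2) ^ 2 = (x ⬝ᵥ x) ^ 2 := by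
    simp only [Fintype.sum_prod_type, dotProduct, sq, Finset.sum_mul_sum]
    exact Finset.sum_congr rfl fun i _ => Finset.sum_congr rfl fun j _ => by ring
  have hCS := Finset.sum_mul_sq_le_sq_mul_sq Finset.univ (fun p : Fin d × Fin d => E p.1 p.2)
    (fun p => x p.1 * x p.2)
  rw [← hquad, hsq, Fintype.sum_prod_type] at hCS
  calc |x ⬝ᵥ E *ᵥ x| ≤ √((∑ i, ∑ j, E i j ^ 2) * (x ⬝ᵥ x) ^ 2) := Real.abs_le_sqrt hCS
    _ = frobNorm E * (x ⬝ᵥ x) := by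
      rw [Real.sqrt_mul' _ (sq_nonneg _),
        Real.sqrt_sq (by simpa using dotProduct_star_self_nonneg x)]
      rfl

theorem abs_dotProduct_mulVec_sub_le_of_frobNorm_sub_le {d : ℕ} {A B : Matrix (Fin d) (Fin d) ℝ}
    {ε : ℝ} (h : frobNorm (B - A) ≤ ε) (x : Fin d → ℝ) :
    |x ⬝ᵥ B *ᵥ x - x ⬝ᵥ A *ᵥ x| ≤ ε * (x ⬝ᵥ x) := by
  rw [← dotProduct_sub, ← sub_mulVec]
  exact (abs_dotProduct_mulVec_le_frobNorm _ x).trans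
    (mul_le_mul_of_nonneg_right h (by simpa using dotProduct_star_self_nonneg x))

section psdLE

variable {d : ℕ}

theorem psdLE.dotProduct_mulVec_le {A B : Matrix (Fin d) (Fin d) ℝ} (h : psdLE A B)
    (x : Fin d → ℝ) : x ⬝ᵥ A *ᵥ x ≤ x ⬝ᵥ B *ᵥ x := by
  simpa [sub_mulVec] using h.dotProduct_mulVec_nonneg x

theorem psdLE_of_dotProduct_mulVec_le {A B : Matrix (Fin d) (Fin d) ℝ}
    (hA : A.IsHermitian) (hB : B.IsHermitian) (h : ∀ x, x ⬝ᵥ A *ᵥ x ≤ x ⬝ᵥ B *ᵥ x) :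
    psdLE A B :=
  PosSemidef.of_dotProduct_mulVec_nonneg (hB.sub hA) fun x => by
    simpa [sub_mulVec] using h x

theorem psdLE.smul_one_smul {M : Matrix (Fin d) (Fin d) ℝ} {t a s : ℝ}
    (h : psdLE (t • 1) M) (ha : 0 ≤ a) (hs : s ≤ a * t) : psdLE (s • 1) (a • M) := by
  have hsplit : a • M - s • 1 = a • (M - t • 1) +
      (a * t - s) • (1 : Matrix (Fin d) (Fin d) ℝ) := by
    rw [smul_sub, sub_smul, smul_smul]; abel
  unfold psdLE
  rw [hsplit]
  exact (h.smul ha).add (PosSemidef.one.smul (sub_nonneg.2 hs))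

theorem psdLE.smul_smul_one {M : Matrix (Fin d) (Fin d) ℝ} {t a s : ℝ}
    (h : psdLE M (t • 1)) (ha : 0 ≤ a) (hs : a * t ≤ s) : psdLE (a • M) (s • 1) := by
  have hsplit : s • 1 - a • M = a • (t • 1 - M) +
      (s - a * t) • (1 : Matrix (Fin d) (Fin d) ℝ) := by
    rw [smul_sub, sub_smul, smul_smul]; abel
  unfold psdLE
  rw [hsplit]
  exact (h.smul ha).add (PosSemidef.one.smul (sub_nonneg.2 hs))

end psdLE

def shrinkFactor (κ t : ℝ) : ℝ := if κ / 2 ≤ t then 0.9 else 1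

theorem shrinkFactor_sq_mul_le {κ t : ℝ} (hκ : 0 ≤ κ) (ht : t ≤ 1.01 * κ) :
    (t + 0.01 * κ) * shrinkFactor κ t ^ 2 ≤ 0.83 * κ := by
  unfold shrinkFactor
  split_ifs <;> nlinarith

theorem le_shrinkFactor_sq_mul {κ t : ℝ} (hκ : 20 ≤ κ) (ht : 1 - 0.01 * κ ≤ t) :
    0.85 * κ ≤ (κ - 7.5 + 7.5 * (t - 0.01 * κ)) * shrinkFactor κ t ^ 2 := by
  unfold shrinkFactor
  split_ifs <;> nlinarith

theorem shrinkFactor_sum_bounds {ι : Type*} [Fintype ι] {κ q : ℝ} (hκ : 20 ≤ κ) (l c : ι → ℝ)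
    (hl : ∀ i, l i ∈ Set.Icc (1 - 0.01 * κ) (1.01 * κ))
    (hq : ∑ i, (shrinkFactor κ (l i) * c i) ^ 2 ≤ q)
    (hE : |∑ i, l i * (shrinkFactor κ (l i) * c i) ^ 2 - q|
      ≤ 0.01 * κ * ∑ i, (shrinkFactor κ (l i) * c i) ^ 2) :
    0.85 * ∑ i, c i ^ 2 ≤ q ∧ q ≤ 0.83 * κ * ∑ i, c i ^ 2 := by
  set N := ∑ i, (shrinkFactor κ (l i) * c i) ^ 2
  set H := ∑ i, l i * (shrinkFactor κ (l i) * c i) ^ 2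
  obtain ⟨hE₁, hE₂⟩ := abs_le.mp hE
  constructor
  · have hsum : 0.85 * κ * ∑ i, c i ^ 2 ≤ (κ - 7.5) * N + 7.5 * (H - 0.01 * κ * N) := by
      calc 0.85 * κ * ∑ i, c i ^ 2
          ≤ ∑ i, (κ - 7.5 + 7.5 * (l i - 0.01 * κ)) * shrinkFactor κ (l i) ^ 2 * c i ^ 2 := by
            rw [Finset.mul_sum]
            exact Finset.sum_le_sum fun i _ => mul_le_mul_of_nonneg_right
              (le_shrinkFactor_sq_mul hκ (hl i).1) (sq_nonneg _)
        _ = (κ - 7.5) * N + 7.5 * (H - 0.01 * κ * N) := by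
            simp only [N, H, Finset.mul_sum, ← Finset.sum_sub_distrib, ← Finset.sum_add_distrib]
            exact Finset.sum_congr rfl fun i _ => by ring
    have hN : 0 ≤ N := Finset.sum_nonneg fun i _ => sq_nonneg _
    nlinarith
  · calc q ≤ H + 0.01 * κ * N := by linarith
      _ = ∑ i, (l i + 0.01 * κ) * shrinkFactor κ (l i) ^ 2 * c i ^ 2 := by
          simp only [N, H, Finset.mul_sum, ← Finset.sum_add_distrib]
          exact Finset.sum_congr rfl fun i _ => by ring
      _ ≤ 0.83 * κ * ∑ i, c i ^ 2 := by
          rw [Finset.mul_sum]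
          exact Finset.sum_le_sum fun i _ => mul_le_mul_of_nonneg_right
            (shrinkFactor_sq_mul_le (by linarith) (hl i).2) (sq_nonneg _)

section ShrinkPreconditioner

variable {d : ℕ} {κ : ℝ} {S Shat A₀ : Matrix (Fin d) (Fin d) ℝ} (U : unitaryGroup (Fin d) ℝ)
  {l : Fin d → ℝ}

theorem mem_Icc_of_frobNorm_sub_le
    (hShat : Shat = U * diagonal l * star (U : Matrix (Fin d) (Fin d) ℝ))
    (h₁ : psdLE 1 S) (h₂ : psdLE S (κ • 1)) (herr : frobNorm (Shat - S) ≤ 0.01 * κ) (i : Fin d) :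
    l i ∈ Set.Icc (1 - 0.01 * κ) (1.01 * κ) := by
  refine mem_Icc_of_unitary_conj_diagonal U hShat (fun x => ?_) i
  have hS₁ := h₁.dotProduct_mulVec_le x
  have hS₂ := h₂.dotProduct_mulVec_le x
  obtain ⟨hE₁, hE₂⟩ := abs_le.mp (abs_dotProduct_mulVec_sub_le_of_frobNorm_sub_le herr x)
  rw [one_mulVec] at hS₁
  rw [dotProduct_smul_one_mulVec] at hS₂
  constructor <;> linarith

theorem dotProduct_shrink_conj_mulVec_bounds (hκ : 20 ≤ κ)
    (hShat : Shat = U * diagonal l * star (U : Matrix (Fin d) (Fin d) ℝ))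
    (hA₀ : A₀ = U * diagonal (fun i => shrinkFactor κ (l i)) *
      star (U : Matrix (Fin d) (Fin d) ℝ))
    (h₁ : psdLE 1 S) (h₂ : psdLE S (κ • 1)) (herr : frobNorm (Shat - S) ≤ 0.01 * κ)
    (v : Fin d → ℝ) :
    0.85 * (v ⬝ᵥ v) ≤ v ⬝ᵥ (A₀ * S * A₀) *ᵥ v ∧
      v ⬝ᵥ (A₀ * S * A₀) *ᵥ v ≤ 0.83 * κ * (v ⬝ᵥ v) := by
  obtain ⟨c, rfl⟩ : ∃ c, v = (U : Matrix (Fin d) (Fin d) ℝ) *ᵥ c :=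
    ⟨star (U : Matrix (Fin d) (Fin d) ℝ) *ᵥ v, by
      rw [mulVec_mulVec, Unitary.mul_star_self_of_mem U.2, one_mulVec]⟩
  set y : Fin d → ℝ := fun i => shrinkFactor κ (l i) * c i
  set w := (U : Matrix (Fin d) (Fin d) ℝ) *ᵥ y
  have hA₀U : A₀ *ᵥ ((U : Matrix (Fin d) (Fin d) ℝ) *ᵥ c) = w := by
    rw [hA₀, mulVec_mulVec, mul_assoc, Unitary.coe_star_mul_self, mul_one, ← mulVec_mulVec]
    exact congrArg _ (funext fun i => mulVec_diagonal _ _ i)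
  have hA₀sym : A₀ᴴ = A₀ := by
    rw [hA₀]; exact isHermitian_mul_mul_conjTranspose _ (isHermitian_diagonal _)
  have hquad := star_dotProduct_conjTranspose_mul_mul_mulVec A₀ S
    ((U : Matrix (Fin d) (Fin d) ℝ) *ᵥ c)
  simp only [star_trivial, hA₀sym, hA₀U] at hquad
  have hsq (x : Fin d → ℝ) : x ⬝ᵥ x = ∑ i, x i ^ 2 := by simp only [dotProduct, sq]
  have hN : w ⬝ᵥ w = ∑ i, y i ^ 2 := by rw [dotProduct_unitary_mulVec_self, hsq]
  have hH : w ⬝ᵥ Shat *ᵥ w = ∑ i, l i * y i ^ 2 := by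
    rw [hShat, dotProduct_unitary_conj_mulVec, dotProduct_diagonal_mulVec_self]
  have hS := h₁.dotProduct_mulVec_le w
  have hE := abs_dotProduct_mulVec_sub_le_of_frobNorm_sub_le herr w
  rw [one_mulVec, hN] at hS
  rw [hH, hN] at hE
  rw [hquad, dotProduct_unitary_mulVec_self, hsq]
  exact shrinkFactor_sum_bounds hκ l c (mem_Icc_of_frobNorm_sub_le U hShat h₁ h₂ herr) hS hE

theorem psdLE_shrink_conj_bounds (hκ : 20 ≤ κ)
    (hShat : Shat = U * diagonal l * star (U : Matrix (Fin d) (Fin d) ℝ))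
    (hA₀ : A₀ = U * diagonal (fun i => shrinkFactor κ (l i)) *
      star (U : Matrix (Fin d) (Fin d) ℝ))
    (h₁ : psdLE 1 S) (h₂ : psdLE S (κ • 1)) (herr : frobNorm (Shat - S) ≤ 0.01 * κ) :
    psdLE ((0.85 : ℝ) • 1) (A₀ * S * A₀) ∧ psdLE (A₀ * S * A₀) ((0.83 * κ) • 1) := by
  have hbounds := dotProduct_shrink_conj_mulVec_bounds U hκ hShat hA₀ h₁ h₂ herr
  have hS : S.IsHermitian := by simpa using h₁.1.add isHermitian_one
  have hA₀sym : A₀.IsHermitian := by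
    rw [hA₀]; exact isHermitian_mul_mul_conjTranspose _ (isHermitian_diagonal _)
  have hM : (A₀ * S * A₀).IsHermitian := by
    simpa only [hA₀sym.eq] using isHermitian_conjTranspose_mul_mul A₀ hS
  have hscalar (t : ℝ) : (t • 1 : Matrix (Fin d) (Fin d) ℝ).IsHermitian :=
    isHermitian_one.smul (IsSelfAdjoint.all t)
  refine ⟨psdLE_of_dotProduct_mulVec_le (hscalar _) hM fun x => ?_,
    psdLE_of_dotProduct_mulVec_le hM (hscalar _) fun x => ?_⟩ <;>
    rw [dotProduct_smul_one_mulVec]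
  exacts [(hbounds x).1, (hbounds x).2]

end ShrinkPreconditioner

/-- **Deterministic core of the one-round weak private preconditioning step.**
Let `I ⪯ S ⪯ κ·I` with `κ ≥ 20`, and let `Shat` be symmetric with
`‖Shat - S‖_F ≤ 0.01·κ`. Let `P` be the orthogonal projection onto the span of the
eigenvectors of `Shat` with eigenvalue at least `κ/2` (expressed via the spectral
decomposition of `Shat`), and set `A₀ = 0.9·P + (I - P)`. Then
`0.85·I ⪯ A₀ S A₀ ⪯ 0.83·κ·I`; consequently `A = √1.19 · A₀` satisfies
`I ⪯ A S A ⪯ 0.99·κ·I`. -/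
theorem weak_preconditioning {d : ℕ} (κ : ℝ) (hκ : 20 ≤ κ)
    (S Shat : Matrix (Fin d) (Fin d) ℝ) (hShat : Shat.IsHermitian)
    (h₁ : psdLE 1 S) (h₂ : psdLE S (κ • 1))
    (herr : frobNorm (Shat - S) ≤ 0.01 * κ)
    (P : Matrix (Fin d) (Fin d) ℝ)
    (hP : P = (hShat.eigenvectorUnitary : Matrix (Fin d) (Fin d) ℝ) *
        Matrix.diagonal (fun i => if κ / 2 ≤ hShat.eigenvalues i then (1 : ℝ) else 0) *
        star (hShat.eigenvectorUnitary : Matrix (Fin d) (Fin d) ℝ))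
    (A₀ A : Matrix (Fin d) (Fin d) ℝ)
    (hA₀ : A₀ = (0.9 : ℝ) • P + (1 - P))
    (hA : A = Real.sqrt 1.19 • A₀) :
    (psdLE ((0.85 : ℝ) • 1) (A₀ * S * A₀) ∧ psdLE (A₀ * S * A₀) ((0.83 * κ) • 1))
    ∧ (psdLE 1 (A * S * A) ∧ psdLE (A * S * A) ((0.99 * κ) • 1)) := by
  set U := hShat.eigenvectorUnitary
  have hShat' :
      Shat = U * diagonal hShat.eigenvalues * star (U : Matrix (Fin d) (Fin d) ℝ) := by
    simpa using hShat.spectral_theorem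
  have hA₀' : A₀ = U * diagonal (fun i => shrinkFactor κ (hShat.eigenvalues i)) *
      star (U : Matrix (Fin d) (Fin d) ℝ) := by
    rw [hA₀, hP]
    exact smul_add_one_sub_unitary_conj_diagonal U fun i => by
      unfold shrinkFactor; split_ifs <;> norm_num
  obtain ⟨hlow, hupp⟩ := psdLE_shrink_conj_bounds U hκ hShat' hA₀' h₁ h₂ herr
  have hASA : A * S * A = (1.19 : ℝ) • (A₀ * S * A₀) := by
    rw [hA, smul_mul, smul_mul, Matrix.mul_smul, smul_smul, Real.mul_self_sqrt (by norm_num)]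
  refine ⟨⟨hlow, hupp⟩, ?_, ?_⟩ <;> rw [hASA]
  · simpa using hlow.smul_one_smul (a := 1.19) (s := 1) (by norm_num) (by norm_num)
  · exact hupp.smul_smul_one (by norm_num) (by linarith)

end
end
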